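/- For each integer n ≥ 0, the Euler polynomial E_n(x) equals (−1)^n times the determinant of the (n+1)×(n+1) matrix whose first column has entries 1, x, ..., x^n and whose (i,j)-entry for j ≥ 2 is C(i−1, j−2)·b_{i−j+1} if i ≥ j−1 and 0 otherwise, where b_0 = 1 and b_m = 1/2 for m ≥ 1. -/

import Mathlib

open Finset

/-- Stirling numbers of the second kind `S(n,k)`. -/
def stirling : ℕ → ℕ → ℕ
  | 0, 0 => 1
  | 0, _ + 1 => 0
  | _ + 1, 0 => 0
  | n + 1, k + 1 => (k + 1) * stirling n (k + 1) + stirling n k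

/-- The classical Euler polynomial `E_n(x)`, defined by the generating function
`2 e^{xt}/(eᵗ+1) = ∑ E_n(x) tⁿ/n!`, i.e. as the `n`-th derivative at `t = 0`. -/
noncomputable def eulerPoly (n : ℕ) (x : ℝ) : ℝ :=
  iteratedDeriv n (fun t => 2 * Real.exp (x * t) / (Real.exp t + 1)) 0

/-!
Multiplying the generating function `2e^{xt}/(eᵗ+1)` by `(eᵗ+1)/2`, whose `m`-th derivative
at `0` is `b_m`, gives `e^{xt}`; by Leibniz' rule `∑_{k ≤ n} C(n,k) b_{n-k} E_k(x) = xⁿ`. So the vector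
`(E_k(x))_k` solves a unitriangular linear system with right-hand side `(xⁱ)_i`, and by Cramer's rule
`E_n(x)` is the determinant of the system's matrix with its last column replaced by `(xⁱ)_i`.
Moving that column to the front is an `(n+1)`-cycle of the columns, of sign `(-1)ⁿ`.
-/

section

open Matrix

variable {R : Type*} [CommRing R]

def binomialConvMatrix (b : ℕ → R) (n : ℕ) : Matrix (Fin (n + 1)) (Fin (n + 1)) R :=
  Matrix.of fun i k => ((i : ℕ).choose k : R) * b (i - k)

def binomialHessenbergMatrix (b v : ℕ → R) (n : ℕ) : Matrix (Fin (n + 1)) (Fin (n + 1)) R :=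
  Matrix.of fun i j =>
    if (j : ℕ) = 0 then v i
    else if (j : ℕ) ≤ (i : ℕ) + 1 then ((i : ℕ).choose ((j : ℕ) - 1) : R) * b (i + 1 - j)
    else 0

variable {b : ℕ → R}

theorem det_binomialConvMatrix (hb : b 0 = 1) (n : ℕ) : (binomialConvMatrix b n).det = 1 := by
  rw [det_of_isLowerTriangular]
  · exact prod_eq_one fun i _ => by simp [binomialConvMatrix, hb]
  · intro i k (hik : (i : ℕ) < k)
    simp [binomialConvMatrix, Nat.choose_eq_zero_of_lt hik]

theorem binomialConvMatrix_mulVec (n : ℕ) (p : ℕ → R) (i : Fin (n + 1)) :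
    (binomialConvMatrix b n *ᵥ fun k => p k) i =
      ∑ k ∈ range (i + 1), ((i : ℕ).choose k : R) * b (i - k) * p k := by
  simp only [mulVec, dotProduct, binomialConvMatrix, of_apply]
  rw [Fin.sum_univ_eq_sum_range (fun k => ((i : ℕ).choose k : R) * b (i - k) * p k)]
  refine (sum_subset (range_subset_range.mpr i.isLt) fun k _ hk => ?_).symm
  simp [Nat.choose_eq_zero_of_lt (not_lt.mp (mem_range.not.mp hk))]

theorem binomialHessenbergMatrix_submatrix_finRotate (v : ℕ → R) (n : ℕ) :
    (binomialHessenbergMatrix b v n).submatrix id (finRotate (n + 1)) =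
      (binomialConvMatrix b n).updateCol (Fin.last n) fun i => v i := by
  ext i j
  rcases Fin.eq_castSucc_or_eq_last j with ⟨j, rfl⟩ | rfl
  · simp [binomialHessenbergMatrix, binomialConvMatrix, finRotate_apply, Fin.castSucc_ne_last]
    intro hij
    simp [Nat.choose_eq_zero_of_lt hij]
  · simp [binomialHessenbergMatrix]

theorem eq_neg_one_pow_mul_det_binomialHessenbergMatrix (hb : b 0 = 1) {p v : ℕ → R}
    (hpv : ∀ i, ∑ k ∈ range (i + 1), (i.choose k : R) * b (i - k) * p k = v i) (n : ℕ) :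
    p n = (-1) ^ n * (binomialHessenbergMatrix b v n).det := by
  have hv : (fun i => ∑ k : Fin (n + 1), p k • binomialConvMatrix b n i k) =
      fun i : Fin (n + 1) => v i := by
    ext i
    rw [← hpv, ← binomialConvMatrix_mulVec]
    simp only [mulVec, dotProduct, smul_eq_mul, mul_comm]
  have hdet := det_updateCol_sum (binomialConvMatrix b n) (Fin.last n) fun k => p k
  rw [hv, ← binomialHessenbergMatrix_submatrix_finRotate, det_permute', sign_finRotate,
    det_binomialConvMatrix hb] at hdet
  simpa using hdet.symm

end

section

open Real

theorem iteratedDeriv_exp_add_one_div_two (m : ℕ) :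
    iteratedDeriv m (fun t => (exp t + 1) / 2) 0 = if m = 0 then 1 else 1 / 2 := by
  cases m with
  | zero => norm_num
  | succ m =>
    have hderiv : deriv (fun t => (exp t + 1) / 2) = fun t => exp t / 2 := by
      ext t; simp
    rw [iteratedDeriv_succ', hderiv, iteratedDeriv_div_const, iteratedDeriv_eq_iterate,
      iter_deriv_exp]
    simp

theorem sum_choose_mul_eulerPoly (x : ℝ) (n : ℕ) :
    ∑ k ∈ range (n + 1), (n.choose k : ℝ) * (if n - k = 0 then 1 else 1 / 2) * eulerPoly k x =
      x ^ n := by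
  have hprod : (fun t => 2 * exp (x * t) / (exp t + 1) * ((exp t + 1) / 2)) =
      fun t => exp (x * t) := by
    ext t
    field_simp
  have hleibniz := iteratedDeriv_fun_mul (n := n) (x := (0 : ℝ))
    (f := fun t => 2 * exp (x * t) / (exp t + 1)) (g := fun t => (exp t + 1) / 2)
    (by fun_prop (disch := positivity)) (by fun_prop)
  rw [hprod, iteratedDeriv_exp_const_mul] at hleibniz
  simp only [mul_zero, exp_zero, mul_one] at hleibniz
  rw [hleibniz]
  refine sum_congr rfl fun k _ => ?_
  rw [iteratedDeriv_exp_add_one_div_two, eulerPoly]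
  ring

end

/-- The determinantal expression for the classical Euler polynomials, where
`b₀ = 1` and `b_m = 1/2` for `m ≥ 1`. -/
theorem eulerPoly_det (n : ℕ) (x : ℝ) :
    eulerPoly n x =
      (-1 : ℝ) ^ n *
        (Matrix.of fun i j : Fin (n + 1) =>
          if (j : ℕ) = 0 then x ^ (i : ℕ)
          else if (j : ℕ) ≤ (i : ℕ) + 1 then
            ((i : ℕ).choose ((j : ℕ) - 1) : ℝ) *
              (if (i : ℕ) + 1 - (j : ℕ) = 0 then 1 else 1 / 2)
          else 0).det :=
  eq_neg_one_pow_mul_det_binomialHessenbergMatrix (b := fun m => if m = 0 then 1 else 1 / 2) rfl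
    (sum_choose_mul_eulerPoly x) n
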